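/- arXiv:0709.0048 — 6 statements merged into one kernel-verified Lean document; each statement's English description precedes it below -/
import Mathlib

section
/- Let m1, m2, m3 be odd integers with m1 ≥ m2 ≥ m3 ≥ 3. Then there exists a coloring of the edges of the complete graph on 4·m1 − 4 vertices with three colors such that color 1 contains no cycle of length m1, color 2 contains no cycle of length m2, and color 3 contains no cycle of length m3. (Construction: split the vertex set into four equal parts V1, V2, V3, V4; color all edges inside each part with color 1, the edges between the pairs (V1,V2), (V2,V3), (V3,V4) with color 2, and the edges between the pairs (V1,V3), (V2,V4), (V1,V4) with color 3; then color 1 has no cycle longer than m1 − 1 and colors 2 and 3 are bipartite, hence contain no odd cycle.) -/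
open SimpleGraph

/-- The graph spanned by color `i` of a coloring `C` of the edges of the complete graph. -/
def colorGraph {V : Type*} {k : ℕ} (C : Sym2 V → Fin k) (i : Fin k) : SimpleGraph V where
  Adj u v := u ≠ v ∧ C s(u, v) = i
  symm := by
    constructor
    intro u v h
    refine ⟨h.1.symm, ?_⟩
    rw [Sym2.eq_swap]
    exact h.2
  loopless := by
    constructor
    intro v h
    exact h.1 rfl

/-- `G` contains a cycle of length exactly `L`. -/
def hasCycleLength {V : Type*} (G : SimpleGraph V) (L : ℕ) : Prop :=
  ∃ (v : V) (w : G.Walk v v), w.IsCycle ∧ w.length = L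

/-! Split the vertices into four parts of size `m1 - 1`. Colour `0` lives inside the parts, so its
cycles have at most `m1 - 1` vertices. Colours `1` and `2` only join distinct parts, following two
paths on the four parts; each is therefore bipartite and has no odd cycle. -/

theorem not_hasCycleLength_of_colorable_two {V : Type*} {G : SimpleGraph V} (hG : G.Colorable 2)
    {L : ℕ} (hL : Odd L) : ¬ hasCycleLength G L := by
  rintro ⟨v, w, -, rfl⟩
  exact Nat.not_even_iff_odd.mpr hL (two_colorable_iff_forall_loop_even.mp hG v w)

theorem SimpleGraph.Walk.apply_eq_of_mem_support {V W : Type*} {G : SimpleGraph V} {f : V → W}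
    (hf : ∀ ⦃u v⦄, G.Adj u v → f u = f v) {u v : V} (w : G.Walk u v) {x : V}
    (hx : x ∈ w.support) : f x = f u := by
  induction w with
  | nil => rw [Walk.support_nil, List.mem_singleton] at hx; rw [hx]
  | cons h w ih =>
    rcases List.mem_cons.mp hx with rfl | hx
    · rfl
    · exact (ih hx).trans (hf h).symm

theorem not_hasCycleLength_of_adj_fst_eq {V W Q : Type*} [Fintype Q] {G : SimpleGraph V}
    (e : V → W × Q) (he : Function.Injective e) (hG : ∀ ⦃u v⦄, G.Adj u v → (e u).1 = (e v).1)
    {L : ℕ} (hL : Fintype.card Q < L) : ¬ hasCycleLength G L := by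
  rintro ⟨v, w, hw, rfl⟩
  have hsame : ∀ x ∈ w.support.tail, (e x).1 = (e v).1 := fun x hx =>
    w.apply_eq_of_mem_support hG (List.mem_of_mem_tail hx)
  have hnodup : (w.support.tail.map fun x => (e x).2).Nodup :=
    hw.support_nodup.map_on fun x hx y hy hxy =>
      he (Prod.ext ((hsame x hx).trans (hsame y hy).symm) hxy)
  have := hnodup.length_le_card
  rw [List.length_map, List.length_tail, Walk.length_support] at this
  omega

theorem colorable_colorGraph_comp_map {V W : Type*} {k n : ℕ} {c : Sym2 W → Fin k} {i : Fin k}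
    (f : W → Fin n) (hf : ∀ a b, c s(a, b) = i → f a ≠ f b) (p : V → W) :
    (colorGraph (c ∘ Sym2.map p) i).Colorable n :=
  ⟨Coloring.mk (f ∘ p) fun h => hf _ _ h.2⟩

/-- Colours `1` and `2` form the paths `0-1-2-3` and `2-0-3-1` on the parts, bipartite with sides
given by `a % 2` and by `a / 2`. -/
def fourPartColor : Sym2 (Fin 4) → Fin 3 :=
  Sym2.lift ⟨fun a b => if a = b then 0 else if (a : ℕ) + 1 = b ∨ (b : ℕ) + 1 = a then 1 else 2,
    by decide⟩

theorem fourPartColor_eq_zero : ∀ a b, fourPartColor s(a, b) = 0 → a = b := by decide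

theorem fourPartColor_eq_one :
    ∀ a b, fourPartColor s(a, b) = 1 → Fin.ofNat 2 a ≠ Fin.ofNat 2 b := by
  decide

theorem fourPartColor_eq_two :
    ∀ a b, fourPartColor s(a, b) = 2 → Fin.ofNat 2 (a / 2) ≠ Fin.ofNat 2 (b / 2) := by
  decide

theorem ramsey_three_odd_cycles_lower_general
    (m1 m2 m3 : ℕ) (h1 : Odd m1) (h2 : Odd m2) (h3 : Odd m3) :
    ∃ C : Sym2 (Fin (4 * m1 - 4)) → Fin 3,
      ¬ hasCycleLength (colorGraph C 0) m1 ∧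
      ¬ hasCycleLength (colorGraph C 1) m2 ∧
      ¬ hasCycleLength (colorGraph C 2) m3 := by
  let part : Fin (4 * m1 - 4) ≃ Fin 4 × Fin (m1 - 1) :=
    (finCongr (by omega)).trans finProdFinEquiv.symm
  refine ⟨fourPartColor ∘ Sym2.map (Prod.fst ∘ part), ?_, ?_, ?_⟩
  · refine not_hasCycleLength_of_adj_fst_eq (G := colorGraph _ 0) part part.injective
      (fun _ _ h => fourPartColor_eq_zero _ _ h.2) ?_
    simpa using h1.pos
  · exact not_hasCycleLength_of_colorable_two
      (colorable_colorGraph_comp_map _ fourPartColor_eq_one _) h2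
  · exact not_hasCycleLength_of_colorable_two
      (colorable_colorGraph_comp_map _ fourPartColor_eq_two _) h3

theorem ramsey_three_odd_cycles_lower
    (m1 m2 m3 : ℕ) (h1 : Odd m1) (h2 : Odd m2) (h3 : Odd m3)
    (h12 : m2 ≤ m1) (h23 : m3 ≤ m2) (h3' : 3 ≤ m3) :
    ∃ C : Sym2 (Fin (4 * m1 - 4)) → Fin 3,
      ¬ hasCycleLength (colorGraph C 0) m1 ∧
      ¬ hasCycleLength (colorGraph C 1) m2 ∧
      ¬ hasCycleLength (colorGraph C 2) m3 :=
  ramsey_three_odd_cycles_lower_general m1 m2 m3 h1 h2 h3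
end

section
/- Let m1, m2 be even integers with m1 ≥ m2 ≥ 4 and let m3 ≥ 3 be an odd integer. Then there exists a coloring of the edges of the complete graph on 2·m1 + m2 − 4 vertices with three colors such that color 1 contains no cycle of length m1, color 2 contains no cycle of length m2, and color 3 contains no cycle of length m3. (Construction: partition the vertex set into V1, V2, V3, V4 with |V1| = |V2| = m1 − 1 and |V3| = |V4| = m2/2 − 1; color all edges inside each part with color 1, all edges between V1 and V3 and between V2 and V4 with color 2, and all remaining edges with color 3; then color 1 has no cycle longer than m1 − 1, color 2 has no cycle longer than m2 − 2, and color 3 is bipartite.) -/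
open SimpleGraph

/-!
Color 1 only joins vertices of the same part, so a cycle of color 1 has at most `m1 - 1`
vertices. Color 2 joins a big part to a small part on the same side, so a cycle of color 2
alternates between big and small vertices and its `m2 / 2` small vertices lie in one small part
of size `m2 / 2 - 1`. Color 3 is bipartite between the two sides, so it has no odd cycle.
-/

open Finset

namespace SimpleGraph

variable {V : Type*} {G : SimpleGraph V}

lemma Walk.apply_eq_of_mem_support_s5 {α : Type*} (f : V → α)
    (hf : ∀ ⦃a b⦄, G.Adj a b → f a = f b) {u v : V} (w : G.Walk u v) {x : V}
    (hx : x ∈ w.support) : f x = f u := by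
  induction w with
  | nil => rw [Walk.support_nil, List.mem_singleton] at hx; rw [hx]
  | cons h p ih =>
    rcases List.mem_cons.1 (Walk.support_cons h p ▸ hx) with rfl | hx
    · rfl
    · exact (ih hx).trans (hf h).symm

lemma Coloring.two_mul_countP_support_tail_add (c : G.Coloring Bool) {u v : V} (w : G.Walk u v) :
    2 * w.support.tail.countP c + (c u).toNat = w.length + (c v).toNat := by
  induction w with
  | nil => simp
  | @cons u x v h p ih =>
    have hux : c u ≠ c x := c.valid h
    rw [Walk.support_cons, List.tail_cons, ← Walk.cons_tail_support, List.countP_cons,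
      Walk.length_cons]
    cases hu : c u <;> cases hx : c x <;>
      simp only [hu, hx, ne_eq, not_true_eq_false, Bool.toNat_true, Bool.toNat_false,
        Bool.false_eq_true, ↓reduceIte] at hux ih ⊢ <;> omega

lemma Walk.IsCycle.length_le_card {u : V} {w : G.Walk u u} (hw : w.IsCycle) (s : Finset V)
    (hs : ∀ x ∈ w.support, x ∈ s) : w.length ≤ #s := by
  classical
  calc w.length = w.support.tail.length := by simp [Walk.length_support]
    _ = w.support.tail.toFinset.card := (List.toFinset_card_of_nodup hw.support_nodup).symm
    _ ≤ #s := card_le_card fun x hx => hs x (List.mem_of_mem_tail (List.mem_toFinset.1 hx))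

lemma Walk.IsCycle.length_le_two_mul_card {u : V} {w : G.Walk u u} (hw : w.IsCycle)
    (c : G.Coloring Bool) (s : Finset V) (hs : ∀ x ∈ w.support, c x = true → x ∈ s) :
    w.length ≤ 2 * #s := by
  classical
  calc w.length = 2 * w.support.tail.countP c := by
        have := c.two_mul_countP_support_tail_add w; omega
    _ = 2 * (w.support.tail.filter c).toFinset.card := by
        rw [List.countP_eq_length_filter, List.toFinset_card_of_nodup (hw.support_nodup.filter _)]
    _ ≤ 2 * #s := by
        gcongr
        intro x hx
        obtain ⟨hx, hcx⟩ := List.mem_filter.1 (List.mem_toFinset.1 hx)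
        exact hs x (List.mem_of_mem_tail hx) hcx

end SimpleGraph

section partColoring

variable {V : Type*} (p : V → Bool × Bool)

/-- With `p x = (side, small)`, the paper's parts are `V₁ = (false, false)`,
`V₂ = (true, false)`, `V₃ = (false, true)` and `V₄ = (true, true)`. -/
def partColoring : Sym2 V → Fin 3 :=
  Sym2.lift ⟨fun u v => if p u = p v then 0 else if (p u).1 = (p v).1 then 1 else 2,
    fun u v => by simp only [eq_comm]⟩

variable {p}

lemma partColoring_zero_adj {a b : V} (h : (colorGraph (partColoring p) 0).Adj a b) :
    p a = p b := by
  have h := h.2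
  simp only [partColoring, Sym2.lift_mk] at h
  split_ifs at h with h₁ h₂ <;> first | exact h₁ | simp at h

lemma partColoring_one_adj {a b : V} (h : (colorGraph (partColoring p) 1).Adj a b) :
    (p a).1 = (p b).1 ∧ (p a).2 ≠ (p b).2 := by
  have h := h.2
  simp only [partColoring, Sym2.lift_mk] at h
  split_ifs at h with h₁ h₂
  · simp at h
  · exact ⟨h₂, fun h₃ => h₁ (Prod.ext h₂ h₃)⟩
  · simp at h

lemma partColoring_two_adj {a b : V} (h : (colorGraph (partColoring p) 2).Adj a b) :
    (p a).1 ≠ (p b).1 := by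
  have h := h.2
  simp only [partColoring, Sym2.lift_mk] at h
  split_ifs at h with h₁ h₂ <;> first | exact h₂ | simp at h

lemma even_length_of_partColoring_two {v : V} (w : (colorGraph (partColoring p) 2).Walk v v) :
    Even w.length :=
  ((Coloring.mk (fun x => (p x).1) fun h => partColoring_two_adj h).even_length_iff_congr w).2
    Iff.rfl

variable [Fintype V]

lemma length_le_of_isCycle_partColoring_zero {v : V}
    {w : (colorGraph (partColoring p) 0).Walk v v} (hw : w.IsCycle) :
    w.length ≤ #{x | p x = p v} :=
  hw.length_le_card _ fun x hx => by
    simpa using w.apply_eq_of_mem_support_s5 p (fun _ _ => partColoring_zero_adj) hx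

lemma length_le_of_isCycle_partColoring_one {v : V}
    {w : (colorGraph (partColoring p) 1).Walk v v} (hw : w.IsCycle) :
    w.length ≤ 2 * #{x | p x = ((p v).1, true)} :=
  hw.length_le_two_mul_card (Coloring.mk (fun x => (p x).2) fun h => (partColoring_one_adj h).2)
    _ fun x hx hsmall => by
      have hside := w.apply_eq_of_mem_support_s5 (fun x => (p x).1)
        (fun _ _ h => (partColoring_one_adj h).1) hx
      simp only [Coloring.mk, RelHom.coeFn_mk] at hsmall
      simp [Prod.ext_iff, hside, hsmall]

end partColoring

theorem ramsey_two_even_one_odd_cycles_lower_one_general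
    (m1 m2 m3 : ℕ) (h2 : Even m2) (h3 : Odd m3)
    (h12 : m2 ≤ m1) (h2' : 4 ≤ m2) :
    ∃ C : Sym2 (Fin (2 * m1 + m2 - 4)) → Fin 3,
      ¬ hasCycleLength (colorGraph C 0) m1 ∧
      ¬ hasCycleLength (colorGraph C 1) m2 ∧
      ¬ hasCycleLength (colorGraph C 2) m3 := by
  obtain ⟨k, rfl⟩ := h2
  let W := Σ q : Bool × Bool, Fin (cond q.2 (k - 1) (m1 - 1))
  have hW : Fintype.card W = 2 * m1 + (k + k) - 4 := by
    simp only [W, Fintype.card_sigma, Fintype.card_fin, Fintype.sum_prod_type, Fintype.sum_bool,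
      cond_true, cond_false]
    omega
  let e := (Fintype.equivFinOfCardEq hW).symm
  let p x := (e x).1
  have hfiber (q : Bool × Bool) : #{x | p x = q} = cond q.2 (k - 1) (m1 - 1) := by
    rw [← Fintype.card_subtype,
      Fintype.card_congr (e.subtypeEquiv (q := (·.1 = q)) fun _ => Iff.rfl),
      Fintype.card_congr (Equiv.sigmaSubtype q), Fintype.card_fin]
  refine ⟨partColoring p, ?_, ?_, ?_⟩ <;> rintro ⟨v, w, hw, hlen⟩
  · have := length_le_of_isCycle_partColoring_zero hw
    rw [hfiber] at this
    cases hsmall : (p v).2 <;> simp only [hsmall, cond_true, cond_false] at this <;> omega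
  · have := length_le_of_isCycle_partColoring_one hw
    rw [hfiber, cond_true] at this
    omega
  · exact Nat.not_even_iff_odd.2 h3 (hlen ▸ even_length_of_partColoring_two w)

theorem ramsey_two_even_one_odd_cycles_lower_one
    (m1 m2 m3 : ℕ) (h1 : Even m1) (h2 : Even m2) (h3 : Odd m3)
    (h12 : m2 ≤ m1) (h2' : 4 ≤ m2) (h3' : 3 ≤ m3) :
    ∃ C : Sym2 (Fin (2 * m1 + m2 - 4)) → Fin 3,
      ¬ hasCycleLength (colorGraph C 0) m1 ∧
      ¬ hasCycleLength (colorGraph C 1) m2 ∧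
      ¬ hasCycleLength (colorGraph C 2) m3 :=
  ramsey_two_even_one_odd_cycles_lower_one_general m1 m2 m3 h2 h3 h12 h2'
end

section
/- Let m1 ≥ 4 be an even integer and let m2, m3 be odd integers with m2 ≥ m3 ≥ 3. Then there exists a coloring of the edges of the complete graph on m1 + 2·m2 − 4 vertices with three colors such that color 1 contains no cycle of length m1, color 2 contains no cycle of length m2, and color 3 contains no cycle of length m3. (Construction: partition the vertex set into V1, V2, V3, V4 with |V1| = |V2| = m1/2 − 1 and |V3| = |V4| = m2 − 1; color the edges inside V1 and inside V2 and the edges between V1 and V3 and between V2 and V4 with color 1, the edges inside V3 and inside V4 with color 2, and all remaining edges with color 3; then every cycle in color 1 has length at most m1 − 2, every cycle in color 2 has length at most m2 − 1, and color 3 is bipartite, hence has no odd cycle.) -/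
open SimpleGraph

/-!
Split the vertices into two sides, each consisting of `m₁/2 - 1` hubs and `m₂ - 1` further
vertices. Colour 3 joins the two sides, so it is bipartite and has only even cycles. Colour 2
is a clique on the non-hubs of each side, so its cycles have at most `m₂ - 1` vertices. In
colour 1 every edge stays on one side and has a hub as an endpoint; along a cycle each edge
then has its head or its tail among the hubs, and since heads and tails are both injective
on the edges of a cycle, a cycle has at most `2 (m₁/2 - 1) = m₁ - 2` edges.
-/

open Finset

section

variable {V : Type*}

lemma List.Nodup.length_le_card_of_subset {l : List V} (hl : l.Nodup) {s : Finset V}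
    (hs : ∀ x ∈ l, x ∈ s) : l.length ≤ #s :=
  card_le_card (s := ⟨(l : Multiset V), hl⟩) hs

lemma List.Nodup.countP_mem_le_card [DecidableEq V] {l : List V} (hl : l.Nodup)
    (s : Finset V) : l.countP (· ∈ s) ≤ #s := by
  rw [List.countP_eq_length_filter]
  exact (hl.filter _).length_le_card_of_subset fun x hx => by simpa using (List.mem_filter.mp hx).2

end

namespace SimpleGraph.Walk

variable {V : Type*} {G : SimpleGraph V} {u v : V}

lemma apply_eq_of_mem_support_s8 {α : Type*} {f : V → α} (hf : ∀ x y, G.Adj x y → f x = f y)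
    (w : G.Walk u v) {x : V} (hx : x ∈ w.support) : f x = f u := by
  induction w with
  | nil => rw [mem_support_nil_iff.mp hx]
  | cons hadj w ih =>
    rcases List.mem_cons.mp (support_cons _ _ ▸ hx) with rfl | hx
    · rfl
    · rw [ih hx, hf _ _ hadj]

lemma IsCycle.length_le_card_s8 {w : G.Walk v v} (hw : w.IsCycle) {s : Finset V}
    (hs : ∀ x ∈ w.support, x ∈ s) : w.length ≤ #s := by
  simpa using hw.support_nodup.length_le_card_of_subset fun x hx => hs x (List.mem_of_mem_tail hx)

lemma IsCycle.length_le_two_mul_card_s8 {w : G.Walk v v} (hw : w.IsCycle) {s : Finset V}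
    (hs : ∀ d ∈ w.darts, d.fst ∈ s ∨ d.snd ∈ s) : w.length ≤ 2 * #s := by
  classical
  have hfst : w.darts.countP (·.fst ∈ s) ≤ #s := by
    have := hw.nodup_dropLast_support.countP_mem_le_card s
    rwa [← map_fst_darts, List.countP_map] at this
  have hsnd : w.darts.countP (·.snd ∈ s) ≤ #s := by
    have := hw.support_nodup.countP_mem_le_card s
    rwa [← map_snd_darts, List.countP_map] at this
  rw [← length_darts, List.length_eq_countP_add_countP (·.snd ∈ s)]
  refine (add_le_add hsnd (le_trans (List.countP_mono_left fun d hd hnot => ?_) hfst)).trans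
    (by omega)
  simpa using (hs d hd).resolve_right (by simpa using hnot)

end SimpleGraph.Walk

section BlockColoring

variable {V : Type*} (side hub : V → Bool)

/-- The paper's parts are `V₁ = {side = false, hub}`, `V₂ = {side = true, hub}`,
`V₃ = {side = false, ¬hub}` and `V₄ = {side = true, ¬hub}`. -/
def blockColoring : Sym2 V → Fin 3 :=
  Sym2.lift ⟨fun u v => if side u ≠ side v then 2 else if hub u || hub v then 0 else 1,
    fun u v => by simp only [ne_comm, Bool.or_comm]⟩

variable {side hub} {u v : V}

lemma blockColoring_adj_zero (h : (colorGraph (blockColoring side hub) 0).Adj u v) :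
    side u = side v ∧ (hub u || hub v) := by
  have := h.2
  simp only [blockColoring, Sym2.lift_mk] at this
  split_ifs at this <;> simp_all

lemma blockColoring_adj_one (h : (colorGraph (blockColoring side hub) 1).Adj u v) :
    side u = side v ∧ hub u = false ∧ hub v = false := by
  have := h.2
  simp only [blockColoring, Sym2.lift_mk] at this
  split_ifs at this <;> simp_all

lemma blockColoring_adj_two (h : (colorGraph (blockColoring side hub) 2).Adj u v) :
    side u ≠ side v := by
  have := h.2
  simp only [blockColoring, Sym2.lift_mk] at this
  split_ifs at this <;> simp_all

lemma even_length_blockColoring_two (w : (colorGraph (blockColoring side hub) 2).Walk v v) :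
    Even w.length :=
  (Coloring.mk side fun h => blockColoring_adj_two h).even_length_iff_congr w |>.mpr Iff.rfl

variable [Fintype V]

lemma length_le_of_isCycle_blockColoring_zero {a : ℕ} (ha : ∀ s, #{x | side x = s ∧ hub x} ≤ a)
    {w : (colorGraph (blockColoring side hub) 0).Walk v v} (hw : w.IsCycle) :
    w.length ≤ 2 * a := by
  have hside x (hx : x ∈ w.support) : side x = side v :=
    w.apply_eq_of_mem_support_s8 (fun _ _ h => (blockColoring_adj_zero h).1) hx
  refine (hw.length_le_two_mul_card_s8 fun d hd => ?_).trans (Nat.mul_le_mul_left 2 (ha (side v)))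
  have hfst := hside _ (w.dart_fst_mem_support_of_mem_darts hd)
  have hsnd := hside _ (w.dart_snd_mem_support_of_mem_darts hd)
  have := (blockColoring_adj_zero d.adj).2
  simp_all

lemma length_le_of_isCycle_blockColoring_one {b : ℕ}
    (hb : ∀ s, #{x | side x = s ∧ hub x = false} ≤ b)
    {w : (colorGraph (blockColoring side hub) 1).Walk v v} (hw : w.IsCycle) :
    w.length ≤ b := by
  have hv : hub v = false := (blockColoring_adj_one (w.adj_snd hw.not_nil)).2.1
  have hclass x (hx : x ∈ w.support) : (side x, hub x) = (side v, hub v) :=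
    w.apply_eq_of_mem_support_s8 (f := fun x => (side x, hub x)) (fun _ _ h => by
      obtain ⟨hside, hhub, hhub'⟩ := blockColoring_adj_one h
      rw [hside, hhub, hhub']) hx
  refine (hw.length_le_card_s8 fun x hx => ?_).trans (hb (side v))
  simp_all

end BlockColoring

lemma exists_side_hub_card_eq (a b : ℕ) : ∃ side hub : Fin (2 * (a + b)) → Bool,
    (∀ s, #{x | side x = s ∧ hub x} = a) ∧ (∀ s, #{x | side x = s ∧ hub x = false} = b) := by
  let e : Fin (2 * (a + b)) ≃ Bool × (Fin a ⊕ Fin b) := Fintype.equivOfCardEq (by simp)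
  refine ⟨fun x => (e x).1, fun x => (e x).2.isLeft, fun s => ?_, fun s => ?_⟩
  · rw [card_equiv e (t := {y | y.1 = s ∧ y.2.isLeft}) (by simp), card_filter,
      Fintype.sum_prod_type]
    simp only [Fintype.sum_sum_type]
    cases s <;> simp
  · rw [card_equiv e (t := {y | y.1 = s ∧ y.2.isLeft = false}) (by simp), card_filter,
      Fintype.sum_prod_type]
    simp only [Fintype.sum_sum_type]
    cases s <;> simp

theorem ramsey_one_even_two_odd_cycles_lower_two_general
    (m1 m2 m3 : ℕ) (h1 : Even m1) (h2 : Odd m2) (h3 : Odd m3)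
    (h1' : 4 ≤ m1) :
    ∃ C : Sym2 (Fin (m1 + 2 * m2 - 4)) → Fin 3,
      ¬ hasCycleLength (colorGraph C 0) m1 ∧
      ¬ hasCycleLength (colorGraph C 1) m2 ∧
      ¬ hasCycleLength (colorGraph C 2) m3 := by
  obtain ⟨a, rfl⟩ := h1
  obtain ⟨b, rfl⟩ := h2
  rw [show a + a + 2 * (2 * b + 1) - 4 = 2 * ((a - 1) + 2 * b) by omega]
  obtain ⟨side, hub, hhub, hrest⟩ := exists_side_hub_card_eq (a - 1) (2 * b)
  refine ⟨blockColoring side hub, ?_, ?_, ?_⟩ <;> rintro ⟨v, w, hw, hlen⟩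
  · have := length_le_of_isCycle_blockColoring_zero (fun s => (hhub s).le) hw
    omega
  · have := length_le_of_isCycle_blockColoring_one (fun s => (hrest s).le) hw
    omega
  · exact Nat.not_even_iff_odd.mpr h3 (hlen ▸ even_length_blockColoring_two w)

theorem ramsey_one_even_two_odd_cycles_lower_two
    (m1 m2 m3 : ℕ) (h1 : Even m1) (h2 : Odd m2) (h3 : Odd m3)
    (h1' : 4 ≤ m1) (h23 : m3 ≤ m2) (h3' : 3 ≤ m3) :
    ∃ C : Sym2 (Fin (m1 + 2 * m2 - 4)) → Fin 3,
      ¬ hasCycleLength (colorGraph C 0) m1 ∧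
      ¬ hasCycleLength (colorGraph C 1) m2 ∧
      ¬ hasCycleLength (colorGraph C 2) m3 :=
  ramsey_one_even_two_odd_cycles_lower_two_general m1 m2 m3 h1 h2 h3 h1'
end

section
/- Let G = (V, E) be a finite simple graph on n vertices and let α > 0 be a real number. If no non-bipartite connected component of G contains a matching saturating at least α·n vertices, then there exists a partition V = V′ ∪ V″ such that: (i) G contains no edges between V′ and V″; (ii) the subgraph G[V′] induced by V′ is bipartite; and (iii) the subgraph G[V″] induced by V″ has at most 0.5·α·n·|V″| edges. -/
/-!
Let `M` be a maximum matching of a finite graph on `n` vertices and `S` its vertex set. By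
maximality every edge meets `S`, and for a matching edge `ab` there is no augmenting path
`u - a = b - v` with `u ≠ v` outside `S`; so `a` and `b` together have at most `|V \ S| + 1`
neighbours outside `S`. Summing degrees gives `2 e(G) ≤ |S| n`.

Take `V''` to be the union of the non-bipartite components and `V'` the rest. In a
non-bipartite component `C` the maximum matching covers fewer than `α n` vertices, so
`2 e(C) < α n |C|`; summing over these components bounds `e(G[V''])`.
-/

open SimpleGraph Finset

theorem Finset.card_add_card_le_card_add_one {α : Type*} [DecidableEq α]
    {s t u : Finset α} (hs : s ⊆ u) (ht : t ⊆ u) (h : ∀ x ∈ s, ∀ y ∈ t, x = y) :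
    #s + #t ≤ #u + 1 := by
  have hinter : #(s ∩ t) ≤ 1 :=
    card_le_one.2 fun x hx y hy ↦ h x (mem_inter.1 hx).1 y (mem_inter.1 hy).2
  have := card_le_card (union_subset hs ht)
  have := card_union_add_card_inter s t
  omega

namespace SimpleGraph.Subgraph

variable {V : Type*} {G : SimpleGraph V} {M : G.Subgraph} {a b u v : V}

def IsMaximumMatching (M : G.Subgraph) : Prop :=
  M.IsMatching ∧ ∀ M' : G.Subgraph, M'.IsMatching → M'.verts.ncard ≤ M.verts.ncard

theorem exists_isMaximumMatching [Finite V] (G : SimpleGraph V) :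
    ∃ M : G.Subgraph, M.IsMaximumMatching := by
  obtain ⟨M, hM, hmax⟩ := Set.exists_max_image {M : G.Subgraph | M.IsMatching}
    (fun M ↦ M.verts.ncard) (Set.toFinite _) ⟨⊥, fun _ hv ↦ hv.elim⟩
  exact ⟨M, hM, hmax⟩

theorem IsMatching.sup_subgraphOfAdj (hM : M.IsMatching) (huv : G.Adj u v)
    (hu : u ∉ M.verts) (hv : v ∉ M.verts) : (M ⊔ G.subgraphOfAdj huv).IsMatching := by
  refine hM.sup (.subgraphOfAdj huv) ?_
  rw [hM.support_eq_verts, (IsMatching.subgraphOfAdj huv).support_eq_verts,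
    subgraphOfAdj_verts, Set.disjoint_insert_right, Set.disjoint_singleton_right]
  exact ⟨hu, hv⟩

theorem IsMatching.deleteVerts_pair (hM : M.IsMatching) (hab : M.Adj a b) :
    (M.deleteVerts {a, b}).IsMatching := by
  rintro x ⟨hx, hxab⟩
  obtain ⟨y, hxy, hy⟩ := hM hx
  have hya : y ≠ a := by
    rintro rfl
    exact hxab (.inr (hM.eq_of_adj_left hab hxy.symm).symm)
  have hyb : y ≠ b := by
    rintro rfl
    exact hxab (.inl (hM.eq_of_adj_right hab hxy).symm)
  refine ⟨y, ?_, fun z hz ↦ hy z (deleteVerts_adj.mp hz).2.2.2.2⟩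
  exact deleteVerts_adj.mpr ⟨hx, hxab, M.edge_vert hxy.symm, by simp [hya, hyb], hxy⟩

theorem IsMaximumMatching.eq_of_isMatching_verts_eq [Finite V] (hM : M.IsMaximumMatching)
    {M' : G.Subgraph} (hM' : M'.IsMatching) (hverts : M'.verts = M.verts ∪ {u, v})
    (hu : u ∉ M.verts) (hv : v ∉ M.verts) : u = v := by
  by_contra huv
  have hdisj : Disjoint M.verts {u, v} := by
    rw [Set.disjoint_insert_right, Set.disjoint_singleton_right]
    exact ⟨hu, hv⟩
  have := hM.2 M' hM'
  rw [hverts, Set.ncard_union_eq hdisj, Set.ncard_pair huv] at this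
  omega

theorem IsMaximumMatching.mem_verts_or_mem_verts [Finite V] (hM : M.IsMaximumMatching)
    (huv : G.Adj u v) : u ∈ M.verts ∨ v ∈ M.verts := by
  by_contra! h
  exact huv.ne <| hM.eq_of_isMatching_verts_eq (hM.1.sup_subgraphOfAdj huv h.1 h.2)
    (by rw [verts_sup, subgraphOfAdj_verts]) h.1 h.2

theorem IsMaximumMatching.eq_of_adj_of_adj [Finite V] (hM : M.IsMaximumMatching)
    (hab : M.Adj a b) (hau : G.Adj a u) (hbv : G.Adj b v) (hu : u ∉ M.verts)
    (hv : v ∉ M.verts) : u = v := by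
  by_contra huv
  have ha : a ∈ M.verts := M.edge_vert hab
  have hb : b ∈ M.verts := M.edge_vert hab.symm
  have hM₁ := (hM.1.deleteVerts_pair hab).sup_subgraphOfAdj hau (by simp) (by simp [hu])
  have hM₂ := hM₁.sup_subgraphOfAdj hbv
    (by simp [(M.adj_sub hab).ne.symm, ne_of_mem_of_not_mem hb hu])
    (by simp [hv, (ne_of_mem_of_not_mem ha hv).symm, Ne.symm huv])
  refine huv (hM.eq_of_isMatching_verts_eq hM₂ ?_ hu hv)
  ext x
  simp only [verts_sup, deleteVerts_verts, subgraphOfAdj_verts, Set.mem_union, Set.mem_sdiff,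
    Set.mem_insert_iff, Set.mem_singleton_iff]
  constructor
  · rintro (((⟨hx, -⟩ | rfl | rfl) | rfl | rfl)) <;> tauto
  · rintro (hx | rfl | rfl) <;> by_cases x = a <;> by_cases x = b <;> simp_all

variable [Fintype V] [DecidableRel G.Adj]

theorem IsMaximumMatching.card_adj_notMem_add_card_adj_notMem_le [DecidableEq V]
    [DecidablePred (· ∈ M.verts)] (hM : M.IsMaximumMatching) (hab : M.Adj a b) :
    #{w ∈ M.verts.toFinsetᶜ | G.Adj a w} + #{w ∈ M.verts.toFinsetᶜ | G.Adj b w} ≤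
      #M.verts.toFinsetᶜ + 1 := by
  refine card_add_card_le_card_add_one (filter_subset _ _) (filter_subset _ _) fun u hu v hv ↦ ?_
  simp only [mem_filter, mem_compl, Set.mem_toFinset] at hu hv
  exact hM.eq_of_adj_of_adj hab hu.2 hv.2 hu.1 hv.1

theorem IsMaximumMatching.two_mul_sum_card_adj_notMem_le [DecidableEq V]
    [DecidablePred (· ∈ M.verts)] (hM : M.IsMaximumMatching) :
    2 * ∑ v ∈ M.verts.toFinset, #{w ∈ M.verts.toFinsetᶜ | G.Adj v w} ≤
      #M.verts.toFinset * (#M.verts.toFinsetᶜ + 1) := by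
  set S := M.verts.toFinset
  set out : V → ℕ := fun v ↦ #{w ∈ Sᶜ | G.Adj v w}
  have : ∀ v, ∃ w, v ∈ S → M.Adj v w := fun v ↦ by
    by_cases hv : v ∈ S
    · exact (hM.1 (Set.mem_toFinset.1 hv)).exists.imp fun _ h _ ↦ h
    · exact ⟨v, fun h ↦ absurd h hv⟩
  choose p hp using this
  have hpS (v : V) (hv : v ∈ S) : p v ∈ S := Set.mem_toFinset.2 (M.edge_vert (hp v hv).symm)
  have hpp (v : V) (hv : v ∈ S) : p (p v) = v :=
    hM.1.eq_of_adj_left (hp _ (hpS v hv)) (hp v hv).symm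
  have hswap : ∑ v ∈ S, out (p v) = ∑ v ∈ S, out v :=
    sum_nbij' p p hpS hpS hpp hpp fun _ _ ↦ rfl
  calc 2 * ∑ v ∈ S, out v = ∑ v ∈ S, (out v + out (p v)) := by
        rw [sum_add_distrib, hswap, two_mul]
    _ ≤ ∑ _v ∈ S, (#Sᶜ + 1) :=
      sum_le_sum fun v hv ↦ hM.card_adj_notMem_add_card_adj_notMem_le (hp v hv)
    _ = #S * (#Sᶜ + 1) := by rw [sum_const, smul_eq_mul]

theorem IsMaximumMatching.two_mul_card_edgeFinset_le (hM : M.IsMaximumMatching) :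
    2 * #G.edgeFinset ≤ M.verts.ncard * Fintype.card V := by
  classical
  set S := M.verts.toFinset
  set out : V → ℕ := fun v ↦ #{w ∈ Sᶜ | G.Adj v w}
  have hdeg (v : V) : G.degree v = #{w ∈ S | G.Adj v w} + out v := by
    rw [← card_union_of_disjoint (disjoint_filter_filter disjoint_compl_right), ← filter_union,
      union_compl, ← neighborFinset_eq_filter, card_neighborFinset_eq_degree]
  have hinside (v : V) (hv : v ∈ S) : #{w ∈ S | G.Adj v w} + 1 ≤ #S :=
    card_lt_card (filter_ssubset.2 ⟨v, hv, G.irrefl⟩)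
  have houtside (v : V) (hv : v ∉ S) : out v = 0 := by
    refine card_eq_zero.2 (filter_eq_empty_iff.2 fun w hw hvw ↦ ?_)
    simp only [S, mem_compl, Set.mem_toFinset] at hv hw
    exact (hM.mem_verts_or_mem_verts hvw).elim hv hw
  have hcross : ∑ v ∈ Sᶜ, #{w ∈ S | G.Adj v w} = ∑ v ∈ S, out v := by
    calc ∑ v ∈ Sᶜ, #{w ∈ S | G.Adj v w} = ∑ v ∈ Sᶜ, #{w ∈ S | G.Adj w v} :=
          sum_congr rfl fun v _ ↦ congrArg card (filter_congr fun w _ ↦ G.adj_comm v w)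
      _ = ∑ v ∈ S, out v := (sum_card_bipartiteAbove_eq_sum_card_bipartiteBelow G.Adj).symm
  have hpair : 2 * ∑ v ∈ S, out v ≤ #S * (#Sᶜ + 1) := hM.two_mul_sum_card_adj_notMem_le
  have hS : M.verts.ncard = #S := Set.ncard_eq_toFinset_card' _
  have hn : #S + #Sᶜ = Fintype.card V := card_add_card_compl S
  have hsumS : ∑ v ∈ S, G.degree v + #S ≤ #S * #S + ∑ v ∈ S, out v := by
    calc ∑ v ∈ S, G.degree v + #S = ∑ v ∈ S, (#{w ∈ S | G.Adj v w} + 1 + out v) := by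
          simp_rw [hdeg, sum_add_distrib, sum_const, smul_eq_mul, mul_one]; ring
      _ ≤ ∑ v ∈ S, (#S + out v) := sum_le_sum fun v hv ↦ by have := hinside v hv; omega
      _ = #S * #S + ∑ v ∈ S, out v := by rw [sum_add_distrib, sum_const, smul_eq_mul]
  have hsumSc : ∑ v ∈ Sᶜ, G.degree v = ∑ v ∈ S, out v := by
    rw [← hcross]
    exact sum_congr rfl fun v hv ↦ by rw [hdeg, houtside v (mem_compl.1 hv), add_zero]
  rw [← sum_degrees_eq_twice_card_edges, ← sum_add_sum_compl S, hS, ← hn]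
  nlinarith

end SimpleGraph.Subgraph

namespace SimpleGraph

variable {V : Type*} {G : SimpleGraph V}

theorem colorable_induce_of_forall_mem {s : Set V} {n : ℕ}
    (h : ∀ v ∈ s, (G.induce (G.connectedComponentMk v).supp).Colorable n) :
    (G.induce s).Colorable n := by
  refine colorable_iff_forall_connectedComponent.2 fun d ↦ ?_
  induction d using ConnectedComponent.ind with | h x => ?_
  exact (h x x.2).of_hom
    { toFun w := ⟨w.1.1, ConnectedComponent.sound <|
        (ConnectedComponent.exact w.2).map (Embedding.induce s).toHom⟩
      map_rel' hadj := hadj }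

theorem sum_degree_eq_two_mul_ncard_edgeSet_induce [Fintype V] [DecidableRel G.Adj] {s : Set V}
    [DecidablePred (· ∈ s)] (hs : ∀ v ∈ s, ∀ w, G.Adj v w → w ∈ s) :
    ∑ v ∈ s.toFinset, G.degree v = 2 * (G.induce s).edgeSet.ncard := by
  rw [← coe_edgeFinset, Set.ncard_coe_finset, ← sum_degrees_eq_twice_card_edges,
    sum_subtype s.toFinset fun _ ↦ Set.mem_toFinset]
  exact sum_congr rfl fun v _ ↦ (degree_induce_of_neighborSet_subset (hs v v.2)).symm

theorem exists_isMatching_two_mul_ncard_edgeSet_induce_le [Finite V] (s : Set V) :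
    ∃ M : G.Subgraph, M.IsMatching ∧ M.verts ⊆ s ∧
      2 * (G.induce s).edgeSet.ncard ≤ M.verts.ncard * s.ncard := by
  classical
  have := Fintype.ofFinite V
  obtain ⟨M, hM⟩ := Subgraph.exists_isMaximumMatching (G.induce s)
  have hinj : Function.Injective (Embedding.induce (G := G) s).toHom := Subtype.val_injective
  refine ⟨M.map (Embedding.induce s).toHom, hM.1.map _ hinj, ?_, ?_⟩
  · rintro _ ⟨v, -, rfl⟩
    exact v.2
  · rw [Subgraph.map_verts, Set.ncard_image_of_injective _ hinj, ← coe_edgeFinset,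
      Set.ncard_coe_finset, ← Nat.card_coe_set_eq s, Nat.card_eq_fintype_card]
    exact hM.two_mul_card_edgeFinset_le

theorem two_mul_ncard_edgeSet_induce_le_of_forall_connectedComponent [Finite V]
    {p : G.ConnectedComponent → Prop} {k : ℝ}
    (h : ∀ c, p c → (2 * (G.induce c.supp).edgeSet.ncard : ℝ) ≤ k * c.supp.ncard) :
    (2 * (G.induce {v | p (G.connectedComponentMk v)}).edgeSet.ncard : ℝ) ≤
      k * {v | p (G.connectedComponentMk v)}.ncard := by
  classical
  have := Fintype.ofFinite V
  set B : Finset G.ConnectedComponent := {c | p c}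
  set s : Set V := {v | p (G.connectedComponentMk v)}
  have hs : s.toFinset = B.biUnion fun c ↦ c.supp.toFinset := by
    ext v
    simp [s, B]
  have hdisj : (B : Set G.ConnectedComponent).PairwiseDisjoint fun c ↦ c.supp.toFinset :=
    fun c _ d _ hcd ↦ Set.disjoint_toFinset.2 (G.pairwise_disjoint_supp_connectedComponent hcd)
  have hedges :
      2 * (G.induce s).edgeSet.ncard = ∑ c ∈ B, 2 * (G.induce c.supp).edgeSet.ncard := by
    rw [← sum_degree_eq_two_mul_ncard_edgeSet_induce, hs, sum_biUnion hdisj]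
    · exact sum_congr rfl fun c _ ↦ sum_degree_eq_two_mul_ncard_edgeSet_induce
        fun v hv w hvw ↦ c.mem_supp_of_adj_mem_supp hv hvw
    · intro v hv w hvw
      simpa [s, ConnectedComponent.connectedComponentMk_eq_of_adj hvw] using hv
  have hverts : s.ncard = ∑ c ∈ B, c.supp.ncard := by
    simp_rw [Set.ncard_eq_toFinset_card', hs, card_biUnion hdisj]
  rw [← Nat.cast_ofNat, ← Nat.cast_mul, hedges, hverts]
  push_cast
  rw [mul_sum]
  exact sum_le_sum fun c hc ↦ h c (mem_filter.1 hc).2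

end SimpleGraph

theorem no_large_nonbipartite_matching_structure_general {V : Type*} [Fintype V]
    (G : SimpleGraph V) (α : ℝ)
    (h : ¬ ∃ (c : G.ConnectedComponent) (M : G.Subgraph),
        ¬ (G.induce c.supp).Colorable 2 ∧ M.IsMatching ∧ M.verts ⊆ c.supp ∧
        α * Fintype.card V ≤ (M.verts.ncard : ℝ)) :
    ∃ V' V'' : Set V,
      Disjoint V' V'' ∧ V' ∪ V'' = Set.univ ∧
      (∀ u ∈ V', ∀ w ∈ V'', ¬ G.Adj u w) ∧
      (G.induce V').Colorable 2 ∧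
      (((G.induce V'').edgeSet.ncard : ℝ) ≤ 0.5 * α * Fintype.card V * V''.ncard) := by
  push Not at h
  set V'' : Set V := {v | ¬(G.induce (G.connectedComponentMk v).supp).Colorable 2}
  refine ⟨V''ᶜ, V'', disjoint_compl_left, Set.compl_union_self _, ?_, ?_, ?_⟩
  · intro u hu w hw huw
    have hw' : ¬(G.induce (G.connectedComponentMk w).supp).Colorable 2 := hw
    rw [← ConnectedComponent.connectedComponentMk_eq_of_adj huw] at hw'
    exact hu hw'
  · exact colorable_induce_of_forall_mem fun v hv ↦ not_not.1 hv
  have hcomp (c : G.ConnectedComponent) (hc : ¬(G.induce c.supp).Colorable 2) :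
      (2 * (G.induce c.supp).edgeSet.ncard : ℝ) ≤ α * Fintype.card V * c.supp.ncard := by
    obtain ⟨M, hM, hMc, hedges⟩ :=
      exists_isMatching_two_mul_ncard_edgeSet_induce_le (G := G) c.supp
    have hsmall := h c M hc hM hMc
    calc (2 * (G.induce c.supp).edgeSet.ncard : ℝ) ≤ M.verts.ncard * c.supp.ncard := by
          exact_mod_cast hedges
      _ ≤ α * Fintype.card V * c.supp.ncard := by gcongr
  have := two_mul_ncard_edgeSet_induce_le_of_forall_connectedComponent hcomp
  linarith

theorem no_large_nonbipartite_matching_structure {V : Type*} [Fintype V]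
    (G : SimpleGraph V) (α : ℝ) (hα : 0 < α)
    (h : ¬ ∃ (c : G.ConnectedComponent) (M : G.Subgraph),
        ¬ (G.induce c.supp).Colorable 2 ∧ M.IsMatching ∧ M.verts ⊆ c.supp ∧
        α * Fintype.card V ≤ (M.verts.ncard : ℝ)) :
    ∃ V' V'' : Set V,
      Disjoint V' V'' ∧ V' ∪ V'' = Set.univ ∧
      (∀ u ∈ V', ∀ w ∈ V'', ¬ G.Adj u w) ∧
      (G.induce V').Colorable 2 ∧
      (((G.induce V'').edgeSet.ncard : ℝ) ≤ 0.5 * α * Fintype.card V * V''.ncard) :=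
  no_large_nonbipartite_matching_structure_general G α h
end

section
/- Let 0 ≤ ν1 ≤ ν2 ≤ 1, let 0 < ε < 0.01·ν1, and let N ≥ 4/ε be an integer. Let U1, U2 be two (not necessarily disjoint) subsets of {1, 2, …, N} with |U1| = ν1·N and |U2| = ν2·N. Let G be a graph obtained from the complete graph on the vertex set {1, …, N} by removing all edges with both endpoints in U1, all edges with both endpoints in U2, and possibly at most ε³·N(N−1)/2 other edges. Then G contains a connected component with a matching saturating at least: (i) (1 − 5ε)·N vertices, if |U2| ≤ N/2; and (ii) (2 − 7ε)·N − 2|U2| vertices, if |U2| ≥ N/2. -/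
/-!
Write `A = U₁ \ U₂`, `B = U₂ \ U₁`, `W = U₁ ∩ U₂` and `F` for the vertices outside `U₁ ∪ U₂`,
and call a non-edge of `G` a defect if it lies neither inside `U₁` nor inside `U₂`. Match greedily
`A` into `B`, then `W` together with the unmatched part of `B` into `F`, then the unmatched part
of `F` within itself. Two leftover sets with no edges between them span only defects, so the
smaller one has size at most the square root of twice the number of defects, `O(ε^{3/2} N)`.
Since `|A| ≤ |B|`, and `|W| + |B| ≤ |A| + |F|` when `|U₂| ≤ N/2`, all leftovers are that small,
except for the surplus `2|U₂| - N` of `W ∪ B` over `F` in case (ii).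

For connectivity, two vertices outside `U₁` with fewer than `εN` defects each have a common
neighbour outside `U₂`, so all of them lie in one component. Every edge has an endpoint outside
the independent set `U₁`, so restricting the matching to that component loses only the edges at
the few vertices with many defects.
-/

open Finset

namespace SimpleGraph

variable {V : Type*} {G : SimpleGraph V}

section Matching

theorem exists_isMatching_verts_eq_union {S T : Set V}
    (hS : ∃ M : G.Subgraph, M.IsMatching ∧ M.verts = S)
    (hT : ∃ M : G.Subgraph, M.IsMatching ∧ M.verts = T) (hST : Disjoint S T) :
    ∃ M : G.Subgraph, M.IsMatching ∧ M.verts = S ∪ T := by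
  obtain ⟨M, hM, rfl⟩ := hS
  obtain ⟨M', hM', rfl⟩ := hT
  exact ⟨M ⊔ M', hM.sup hM' (by rwa [hM.support_eq_verts, hM'.support_eq_verts]), rfl⟩

theorem exists_isMatching_verts_eq_insert {S : Set V} {x y : V} (hxy : G.Adj x y)
    (hS : ∃ M : G.Subgraph, M.IsMatching ∧ M.verts = S) (hx : x ∉ S) (hy : y ∉ S) :
    ∃ M : G.Subgraph, M.IsMatching ∧ M.verts = insert x (insert y S) := by
  simpa [Set.insert_union] using
    exists_isMatching_verts_eq_union ⟨_, .subgraphOfAdj hxy, rfl⟩ hS (by simp [hx, hy])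

theorem exists_isMatching_between [DecidableEq V] (X Y : Finset V) (hXY : Disjoint X Y) :
    ∃ X' ⊆ X, ∃ Y' ⊆ Y, (∃ M : G.Subgraph, M.IsMatching ∧ M.verts = ↑(X \ X' ∪ Y \ Y')) ∧
      #X' + #Y = #Y' + #X ∧ ∀ x ∈ X', ∀ y ∈ Y', ¬G.Adj x y := by
  induction X using Finset.strongInduction generalizing Y with
  | H X ih =>
  by_cases h : ∃ x ∈ X, ∃ y ∈ Y, G.Adj x y
  · obtain ⟨x, hx, y, hy, hxy⟩ := h
    obtain ⟨X', hX', Y', hY', hM, hcard, hnadj⟩ := ih (X.erase x) (erase_ssubset hx) (Y.erase y)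
      (disjoint_of_subset_left (erase_subset _ _) (disjoint_of_subset_right (erase_subset _ _) hXY))
    refine ⟨X', hX'.trans (erase_subset _ _), Y', hY'.trans (erase_subset _ _), ?_, ?_, hnadj⟩
    · have hxY := Finset.disjoint_left.mp hXY hx
      have hyX := Finset.disjoint_right.mp hXY hy
      convert exists_isMatching_verts_eq_insert hxy hM (by simp [hxY]) (by simp [hyX]) using 4
      ext v
      grind
    · rw [card_erase_of_mem hx, card_erase_of_mem hy] at hcard
      have := card_pos.mpr ⟨x, hx⟩
      have := card_pos.mpr ⟨y, hy⟩
      omega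
  · push Not at h
    exact ⟨X, subset_rfl, Y, subset_rfl, ⟨⊥, fun _ h ↦ h.elim, by simp⟩, add_comm _ _, h⟩

theorem exists_isMatching_within [DecidableEq V] (Z : Finset V) :
    ∃ Z' ⊆ Z, (∃ M : G.Subgraph, M.IsMatching ∧ M.verts = ↑(Z \ Z')) ∧
      ∀ x ∈ Z', ∀ y ∈ Z', ¬G.Adj x y := by
  induction Z using Finset.strongInduction with
  | H Z ih =>
  by_cases h : ∃ x ∈ Z, ∃ y ∈ Z, G.Adj x y
  · obtain ⟨x, hx, y, hy, hxy⟩ := h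
    have hyx : y ∈ Z.erase x := mem_erase.mpr ⟨hxy.ne.symm, hy⟩
    obtain ⟨Z', hZ', hM, hnadj⟩ := ih ((Z.erase x).erase y)
      ((erase_ssubset hyx).trans (erase_ssubset hx))
    refine ⟨Z', hZ'.trans ((erase_subset _ _).trans (erase_subset _ _)), ?_, hnadj⟩
    convert exists_isMatching_verts_eq_insert hxy hM (by simp) (by simp) using 4
    ext v
    grind
  · push Not at h
    exact ⟨Z, subset_rfl, ⟨⊥, fun _ h ↦ h.elim, by simp⟩, h⟩

theorem Subgraph.IsMatching.ncard_verts_le [Finite V] {M : G.Subgraph} (hM : M.IsMatching)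
    (S B : Set V) (hB : ∀ v w, M.Adj v w → v ∉ S → v ∈ B ∨ w ∈ B) :
    M.verts.ncard ≤ (M.verts ∩ S).ncard + 2 * B.ncard := by
  classical
  let partner : V → V := fun b ↦ if h : ∃ w, M.Adj b w then h.choose else b
  have hpartner : ∀ {b w}, M.Adj b w → partner b = w := fun {b w} h ↦ by
    simp only [partner, dif_pos (⟨w, h⟩ : ∃ w, M.Adj b w)]
    exact hM.eq_of_adj_left (Exists.choose_spec ⟨w, h⟩) h
  have hsub : M.verts \ S ⊆ B ∪ partner '' B := by
    rintro v ⟨hv, hvS⟩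
    obtain ⟨w, hvw, -⟩ := hM hv
    rcases hB v w hvw hvS with hvB | hwB
    · exact .inl hvB
    · exact .inr ⟨w, hwB, hpartner hvw.symm⟩
  calc M.verts.ncard = (M.verts ∩ S).ncard + (M.verts \ S).ncard :=
        (Set.ncard_inter_add_ncard_sdiff_eq_ncard _ _).symm
    _ ≤ (M.verts ∩ S).ncard + (B.ncard + (partner '' B).ncard) := by
        gcongr
        exact (Set.ncard_le_ncard hsub).trans (Set.ncard_union_le _ _)
    _ ≤ (M.verts ∩ S).ncard + 2 * B.ncard := by
        have := Set.ncard_image_le (f := partner) (s := B)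
        omega

theorem exists_connectedComponent_subset_supp [Nonempty V] {K : Set V}
    (hK : ∀ x ∈ K, ∀ y ∈ K, G.Reachable x y) : ∃ c : G.ConnectedComponent, K ⊆ c.supp := by
  rcases K.eq_empty_or_nonempty with rfl | ⟨k, hk⟩
  · exact ⟨G.connectedComponentMk (Classical.arbitrary V), Set.empty_subset _⟩
  · exact ⟨G.connectedComponentMk k, fun x hx ↦ ConnectedComponent.sound (hK x hx k hk)⟩

end Matching

section Counting

variable [Fintype V] (D : SimpleGraph V) [DecidableRel D.Adj]

theorem card_mul_card_le_of_forall_adj [DecidableEq V] {X Y : Finset V}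
    (h : ∀ x ∈ X, ∀ y ∈ Y, x ≠ y → D.Adj x y) :
    #X * #Y ≤ 2 * #D.edgeFinset + #(X ∩ Y) := by
  have hY : ∀ x ∈ X, #Y ≤ D.degree x + if x ∈ Y then 1 else 0 := by
    intro x hx
    have hsub : Y.erase x ⊆ D.neighborFinset x := fun y hy ↦
      (mem_neighborFinset _ _ _).mpr (h x hx y (mem_erase.mp hy).2 (mem_erase.mp hy).1.symm)
    have := card_le_card hsub
    rw [card_neighborFinset_eq_degree] at this
    split_ifs with hxY
    · rw [← card_erase_add_one hxY]
      omega
    · rw [erase_eq_of_notMem hxY] at this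
      omega
  calc #X * #Y = ∑ x ∈ X, #Y := by rw [sum_const, smul_eq_mul]
    _ ≤ ∑ x ∈ X, (D.degree x + if x ∈ Y then 1 else 0) := sum_le_sum hY
    _ ≤ ∑ v, D.degree v + #(X ∩ Y) := by
      rw [sum_add_distrib, sum_boole, Nat.cast_id, filter_mem_eq_inter]
      exact Nat.add_le_add_right (sum_le_sum_of_subset (subset_univ X)) _
    _ = 2 * #D.edgeFinset + #(X ∩ Y) := by rw [sum_degrees_eq_twice_card_edges]

theorem card_filter_le_degree_mul_le (δ : ℝ) :
    (#{v | δ ≤ D.degree v} : ℝ) * δ ≤ 2 * #D.edgeFinset := by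
  calc (#{v | δ ≤ D.degree v} : ℝ) * δ = ∑ v ∈ {v | δ ≤ D.degree v}, δ := by
        rw [sum_const, nsmul_eq_mul]
    _ ≤ ∑ v ∈ {v | δ ≤ D.degree v}, (D.degree v : ℝ) := sum_le_sum fun v hv ↦ (mem_filter.mp hv).2
    _ ≤ ∑ v, (D.degree v : ℝ) := sum_le_sum_of_subset_of_nonneg (subset_univ _) (by simp)
    _ = 2 * #D.edgeFinset := by exact_mod_cast sum_degrees_eq_twice_card_edges D

theorem exists_isMatching_between_card_mul_le [DecidableEq V] (X Y : Finset V)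
    (hXY : Disjoint X Y) (hD : ∀ x ∈ X, ∀ y ∈ Y, x ≠ y → G.Adj x y ∨ D.Adj x y) :
    ∃ X' ⊆ X, ∃ Y' ⊆ Y, (∃ M : G.Subgraph, M.IsMatching ∧ M.verts = ↑(X \ X' ∪ Y \ Y')) ∧
      #X' + #Y = #Y' + #X ∧ #X' * #Y' ≤ 2 * #D.edgeFinset := by
  obtain ⟨X', hX', Y', hY', hM, hcard, hnadj⟩ := G.exists_isMatching_between X Y hXY
  refine ⟨X', hX', Y', hY', hM, hcard, ?_⟩
  have hX'Y' : X' ∩ Y' = ∅ := disjoint_iff_inter_eq_empty.mp (hXY.mono hX' hY')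
  simpa [hX'Y'] using D.card_mul_card_le_of_forall_adj fun x hx y hy hxy ↦
    (hD x (hX' hx) y (hY' hy) hxy).resolve_left (hnadj x hx y hy)

theorem exists_isMatching_within_card_mul_le [DecidableEq V] (Z : Finset V)
    (hD : ∀ x ∈ Z, ∀ y ∈ Z, x ≠ y → G.Adj x y ∨ D.Adj x y) :
    ∃ Z' ⊆ Z, (∃ M : G.Subgraph, M.IsMatching ∧ M.verts = ↑(Z \ Z')) ∧
      #Z' * #Z' ≤ 2 * #D.edgeFinset + #Z' := by
  obtain ⟨Z', hZ', hM, hnadj⟩ := G.exists_isMatching_within Z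
  refine ⟨Z', hZ', hM, ?_⟩
  simpa using D.card_mul_card_le_of_forall_adj fun x hx y hy hxy ↦
    (hD x (hZ' hx) y (hZ' hy) hxy).resolve_left (hnadj x hx y hy)

theorem exists_adj_adj_of_card_lt [DecidableEq V] {x y : V} {H : Finset V}
    (hx : ∀ h ∈ H, x ≠ h → G.Adj x h ∨ D.Adj x h) (hy : ∀ h ∈ H, y ≠ h → G.Adj y h ∨ D.Adj y h)
    (hH : D.degree x + D.degree y + 2 < #H) : ∃ h, G.Adj x h ∧ G.Adj y h := by
  have hcard : #({x, y} ∪ D.neighborFinset x ∪ D.neighborFinset y) < #H := by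
    have := card_union_le ({x, y} ∪ D.neighborFinset x) (D.neighborFinset y)
    have := card_union_le {x, y} (D.neighborFinset x)
    have := card_le_two (a := x) (b := y)
    have := D.card_neighborFinset_eq_degree x
    have := D.card_neighborFinset_eq_degree y
    omega
  obtain ⟨h, hH, hh⟩ := exists_mem_notMem_of_card_lt_card hcard
  simp only [mem_union, mem_insert, mem_singleton, mem_neighborFinset, not_or] at hh
  exact ⟨h, (hx h hH (Ne.symm hh.1.1.1)).resolve_right hh.1.2,
    (hy h hH (Ne.symm hh.1.1.2)).resolve_right hh.2⟩

end Counting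

section TwoHoles

variable {U₁ U₂ : Finset V}

def defectGraph (G : SimpleGraph V) (U₁ U₂ : Finset V) : SimpleGraph V where
  Adj x y := x ≠ y ∧ ¬G.Adj x y ∧ ¬(x ∈ U₁ ∧ y ∈ U₁) ∧ ¬(x ∈ U₂ ∧ y ∈ U₂)
  symm := ⟨fun _ _ h ↦ ⟨h.1.symm, fun h' ↦ h.2.1 h'.symm, fun h' ↦ h.2.2.1 h'.symm,
    fun h' ↦ h.2.2.2 h'.symm⟩⟩
  loopless := ⟨fun _ h ↦ h.1 rfl⟩

instance [DecidableEq V] [DecidableRel G.Adj] : DecidableRel (defectGraph G U₁ U₂).Adj :=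
  fun _ _ ↦ inferInstanceAs (Decidable (_ ∧ _))

theorem adj_or_defectGraph_adj {x y : V} (hxy : x ≠ y) (h₁ : x ∉ U₁ ∨ y ∉ U₁)
    (h₂ : x ∉ U₂ ∨ y ∉ U₂) : G.Adj x y ∨ (defectGraph G U₁ U₂).Adj x y := by
  by_cases h : G.Adj x y
  · exact .inl h
  · exact .inr ⟨hxy, h, by tauto, by tauto⟩

theorem edgeSet_defectGraph :
    (defectGraph G U₁ U₂).edgeSet = {e ∈ (⊤ : SimpleGraph V).edgeSet |
      e ∉ G.edgeSet ∧ ¬(∀ x ∈ e, x ∈ U₁) ∧ ¬(∀ x ∈ e, x ∈ U₂)} := by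
  ext e
  induction e using Sym2.ind
  simp only [mem_edgeSet, defectGraph, Set.mem_ofPred_eq, top_adj, Sym2.mem_iff, forall_eq_or_imp,
    forall_eq]

variable [Fintype V] [DecidableEq V] [DecidableRel G.Adj]

theorem exists_isMatching_across_holes (hU : #U₁ ≤ #U₂) :
    ∃ A' X' F' : Finset V, (∃ M : G.Subgraph, M.IsMatching ∧ M.verts = (↑(A' ∪ X' ∪ F'))ᶜ) ∧
      (∀ v ∈ F', v ∉ U₁ ∧ v ∉ U₂) ∧
      #A' * #A' ≤ 2 * #(defectGraph G U₁ U₂).edgeFinset ∧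
      #X' * #F' ≤ 2 * #(defectGraph G U₁ U₂).edgeFinset ∧
      #X' + Fintype.card V = #F' + 2 * #U₂ + #A' := by
  obtain ⟨A', hA', B', hB', hM₁, hcard₁, hA'B'⟩ :=
    exists_isMatching_between_card_mul_le (G := G) _ (U₁ \ U₂) (U₂ \ U₁) disjoint_sdiff_sdiff
      fun a ha b hb hab ↦
        adj_or_defectGraph_adj hab (.inr (mem_sdiff.mp hb).2) (.inl (mem_sdiff.mp ha).2)
  have mem_F : ∀ v ∈ (U₁ ∪ U₂)ᶜ, v ∉ U₁ ∧ v ∉ U₂ := by grind [mem_compl]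
  obtain ⟨X', hX', F', hF', hM₂, hcard₂, hX'F'⟩ :=
    exists_isMatching_between_card_mul_le (G := G) _ (U₁ ∩ U₂ ∪ B') (U₁ ∪ U₂)ᶜ
      (by grind [Finset.disjoint_left, mem_compl]) fun x _ f hf hxf ↦
        adj_or_defectGraph_adj hxf (.inr (mem_F f hf).1) (.inr (mem_F f hf).2)
  have hU₁ : #(U₁ \ U₂) + #(U₁ ∩ U₂) = #U₁ := card_sdiff_add_card_inter U₁ U₂
  have hU₂ : #(U₂ \ U₁) + #(U₁ ∩ U₂) = #U₂ := by
    rw [inter_comm]; exact card_sdiff_add_card_inter U₂ U₁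
  refine ⟨A', X', F', ?_, fun v hv ↦ mem_F v (hF' hv),
    (Nat.mul_le_mul_left _ (by omega)).trans hA'B', hX'F', ?_⟩
  · obtain ⟨M, hM, hMverts⟩ := exists_isMatching_verts_eq_union hM₁ hM₂ (by
      rw [disjoint_coe]; grind [Finset.disjoint_left, mem_compl])
    refine ⟨M, hM, hMverts.trans ?_⟩
    ext v
    grind [mem_compl]
  · have hWB' : #(U₁ ∩ U₂ ∪ B') = #(U₁ ∩ U₂) + #B' :=
      card_union_of_disjoint (by grind [Finset.disjoint_left])
    have hU₁₂ : #(U₁ ∪ U₂) + #(U₁ ∩ U₂) = #U₁ + #U₂ := card_union_add_card_inter U₁ U₂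
    have hF : #(U₁ ∪ U₂)ᶜ + #(U₁ ∪ U₂) = Fintype.card V := card_compl_add_card _
    omega

theorem exists_isMatching_leftovers (hU : #U₁ ≤ #U₂) :
    ∃ M : G.Subgraph, M.IsMatching ∧ ∃ a x f z : ℕ,
      Fintype.card V ≤ M.verts.ncard + a + x + z ∧
      a * a ≤ 2 * #(defectGraph G U₁ U₂).edgeFinset ∧
      x * f ≤ 2 * #(defectGraph G U₁ U₂).edgeFinset ∧
      z * z ≤ 2 * #(defectGraph G U₁ U₂).edgeFinset + z ∧ z ≤ f ∧
      x + Fintype.card V = f + 2 * #U₂ + a := by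
  obtain ⟨A', X', F', hM₁₂, hF', hA', hX'F', hsurplus⟩ := exists_isMatching_across_holes (G := G) hU
  obtain ⟨Z, hZ, hM₃, hZ'⟩ :=
    exists_isMatching_within_card_mul_le (G := G) (defectGraph G U₁ U₂) F'
      fun z hz z' _ hzz' ↦ adj_or_defectGraph_adj hzz' (.inl (hF' z hz).1) (.inl (hF' z hz).2)
  obtain ⟨M, hM, hMverts⟩ := exists_isMatching_verts_eq_union hM₁₂ hM₃ (by grind)
  have hcover : (↑(A' ∪ X' ∪ Z))ᶜ ⊆ M.verts := by
    rw [hMverts]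
    intro v
    grind
  refine ⟨M, hM, #A', #X', #F', #Z, ?_, hA', hX'F', hZ', card_le_card hZ, hsurplus⟩
  have := Set.ncard_add_ncard_compl (↑(A' ∪ X' ∪ Z) : Set V)
  rw [Set.ncard_coe_finset, Nat.card_eq_fintype_card] at this
  have := Set.ncard_le_ncard hcover
  have := card_union_le (A' ∪ X') Z
  have := card_union_le A' X'
  omega

theorem exists_isMatching_min_le_ncard_verts (hU : #U₁ ≤ #U₂) {s : ℝ} (hs : 0 ≤ s)
    (he : 2 * #(defectGraph G U₁ U₂).edgeFinset ≤ s ^ 2) :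
    ∃ M : G.Subgraph, M.IsMatching ∧
      min (Fintype.card V : ℝ) (2 * (Fintype.card V - #U₂)) ≤ M.verts.ncard + 4 * s + 1 := by
  obtain ⟨M, hM, a, x, f, z, hcover, ha, hxf, hz, hzf, hsurplus⟩ :=
    exists_isMatching_leftovers (G := G) hU
  refine ⟨M, hM, ?_⟩
  have hcover : (Fintype.card V : ℝ) ≤ M.verts.ncard + a + x + z := by exact_mod_cast hcover
  have hsurplus : (x : ℝ) + Fintype.card V = f + 2 * #U₂ + a := by exact_mod_cast hsurplus
  have hzf : (z : ℝ) ≤ f := by exact_mod_cast hzf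
  have ha : (a : ℝ) * a ≤ s ^ 2 := le_trans (by exact_mod_cast ha) he
  have hxf : (x : ℝ) * f ≤ s ^ 2 := le_trans (by exact_mod_cast hxf) he
  have hz : (z : ℝ) * z ≤ s ^ 2 + z := by
    have : (z : ℝ) * z ≤ 2 * #(defectGraph G U₁ U₂).edgeFinset + z := by exact_mod_cast hz
    linarith
  have ha_le : (a : ℝ) ≤ s := by nlinarith
  have hz_le : (z : ℝ) ≤ s + 1 := by nlinarith
  -- The smaller of `x`, `f` is at most `s`; if it is `f`, the surplus identity bounds `x`.
  rcases le_total (f : ℝ) x with hfx | hxf'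
  · have hf : (f : ℝ) ≤ s := by nlinarith
    have := min_le_right (Fintype.card V : ℝ) (2 * (Fintype.card V - #U₂))
    linarith
  · have hx : (x : ℝ) ≤ s := by nlinarith
    have := min_le_left (Fintype.card V : ℝ) (2 * (Fintype.card V - #U₂))
    linarith

theorem exists_isMatching_subset_supp [Nonempty V] (hU₁ : ∀ u ∈ U₁, ∀ v ∈ U₁, ¬G.Adj u v)
    {δ : ℝ} (hδ : 2 * δ + 2 ≤ #U₂ᶜ) {M : G.Subgraph} (hM : M.IsMatching) :
    ∃ c : G.ConnectedComponent, ∃ M' : G.Subgraph, M'.IsMatching ∧ M'.verts ⊆ c.supp ∧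
      M.verts.ncard ≤ M'.verts.ncard + 2 * #{v | δ ≤ (defectGraph G U₁ U₂).degree v} := by
  set D := defectGraph G U₁ U₂
  have hsees : ∀ x ∉ U₁, ∀ h ∈ U₂ᶜ, x ≠ h → G.Adj x h ∨ D.Adj x h := fun x hx h hh hxh ↦
    adj_or_defectGraph_adj hxh (.inl hx) (.inr (mem_compl.mp hh))
  have hcore : ∀ x ∈ {v | v ∉ U₁ ∧ D.degree v < δ}, ∀ y ∈ {v | v ∉ U₁ ∧ D.degree v < δ},
      G.Reachable x y := by
    rintro x ⟨hx₁, hx⟩ y ⟨hy₁, hy⟩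
    obtain ⟨h, hxh, hyh⟩ := exists_adj_adj_of_card_lt D (hsees x hx₁) (hsees y hy₁)
      (by exact_mod_cast (by linarith : (D.degree x + D.degree y + 2 : ℝ) < #U₂ᶜ))
    exact hxh.reachable.trans hyh.symm.reachable
  obtain ⟨c, hc⟩ := exists_connectedComponent_subset_supp hcore
  refine ⟨c, M.induce (M.verts ∩ c.supp), hM.induce_connectedComponent c,
    Set.inter_subset_right, ?_⟩
  have hbad : ∀ v w, M.Adj v w → v ∉ c.supp →
      v ∈ (↑({v | δ ≤ D.degree v} : Finset V) : Set V) ∨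
      w ∈ (↑({v | δ ≤ D.degree v} : Finset V) : Set V) := by
    intro v w hvw hv
    have hw : w ∉ c.supp := fun hw ↦ hv (by
      rw [ConnectedComponent.mem_supp_iff] at hw ⊢
      rw [← hw]
      exact ConnectedComponent.sound (M.adj_sub hvw).reachable)
    have hbad_of : ∀ u, u ∉ U₁ → u ∉ c.supp → δ ≤ D.degree u := fun u hu₁ hu ↦
      le_of_not_gt fun hu' ↦ hu (hc ⟨hu₁, hu'⟩)
    by_cases hv₁ : v ∈ U₁
    · have hw₁ : w ∉ U₁ := fun hw₁ ↦ hU₁ v hv₁ w hw₁ (M.adj_sub hvw)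
      exact .inr (by simpa using hbad_of w hw₁ hw)
    · exact .inl (by simpa using hbad_of v hv₁ hv)
  have := hM.ncard_verts_le c.supp _ hbad
  rwa [Set.ncard_coe_finset] at this

theorem exists_isMatching_subset_supp_min_le (hU₁ : ∀ u ∈ U₁, ∀ v ∈ U₁, ¬G.Adj u v)
    (hU : #U₁ ≤ #U₂) {t : ℝ} (ht : 0 < t) (he : 200 * #(defectGraph G U₁ U₂).edgeFinset ≤ t ^ 2)
    (hU₂ : 2 * t + 2 ≤ #U₂ᶜ) :
    ∃ c : G.ConnectedComponent, ∃ M : G.Subgraph, M.IsMatching ∧ M.verts ⊆ c.supp ∧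
      min (Fintype.card V : ℝ) (2 * (Fintype.card V - #U₂)) ≤ M.verts.ncard + t / 2 + 1 := by
  obtain ⟨M, hM, hMcard⟩ :=
    exists_isMatching_min_le_ncard_verts (G := G) hU (s := t / 10) (by positivity) (by linarith)
  have : Nonempty V := by
    obtain ⟨v, -⟩ := card_pos.mp (by exact_mod_cast (by linarith : (0 : ℝ) < #U₂ᶜ))
    exact ⟨v⟩
  obtain ⟨c, M', hM', hc, hloss⟩ := exists_isMatching_subset_supp hU₁ hU₂ hM
  have hbad := card_filter_le_degree_mul_le (defectGraph G U₁ U₂) t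
  have hbad' : (#{v | t ≤ (defectGraph G U₁ U₂).degree v} : ℝ) ≤ t / 100 := by nlinarith
  have hloss' : (M.verts.ncard : ℝ) ≤ M'.verts.ncard +
      2 * #{v | t ≤ (defectGraph G U₁ U₂).degree v} := by exact_mod_cast hloss
  exact ⟨c, M', hM', hc, by linarith⟩

end TwoHoles

end SimpleGraph

open SimpleGraph

theorem nearly_complete_two_holes_matching_general
    (ν1 ν2 ε : ℝ) (N : ℕ) (h12 : ν1 ≤ ν2) (h21 : ν2 ≤ 1)
    (hε : 0 < ε) (hε' : ε < 0.01 * ν1) (hN : 4 / ε ≤ (N : ℝ))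
    (U1 U2 : Set (Fin N)) (hU1 : (U1.ncard : ℝ) = ν1 * N) (hU2 : (U2.ncard : ℝ) = ν2 * N)
    (G : SimpleGraph (Fin N))
    (hU1e : ∀ u ∈ U1, ∀ v ∈ U1, ¬ G.Adj u v)
    (hrem : ({e ∈ (⊤ : SimpleGraph (Fin N)).edgeSet | e ∉ G.edgeSet ∧
          ¬ (∀ x ∈ e, x ∈ U1) ∧ ¬ (∀ x ∈ e, x ∈ U2)}.ncard : ℝ)
        ≤ ε ^ 3 * ((N : ℝ) * ((N : ℝ) - 1) / 2)) :
    ((U2.ncard : ℝ) ≤ (N : ℝ) / 2 →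
      ∃ (c : G.ConnectedComponent) (M : G.Subgraph),
        M.IsMatching ∧ M.verts ⊆ c.supp ∧ (1 - 5 * ε) * N ≤ (M.verts.ncard : ℝ)) ∧
    ((N : ℝ) / 2 ≤ (U2.ncard : ℝ) →
      ∃ (c : G.ConnectedComponent) (M : G.Subgraph),
        M.IsMatching ∧ M.verts ⊆ c.supp ∧
        (2 - 7 * ε) * N - 2 * U2.ncard ≤ (M.verts.ncard : ℝ)) := by
  classical
  obtain ⟨U₁, rfl⟩ : ∃ U : Finset (Fin N), ↑U = U1 := ⟨U1.toFinset, U1.coe_toFinset⟩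
  obtain ⟨U₂, rfl⟩ : ∃ U : Finset (Fin N), ↑U = U2 := ⟨U2.toFinset, U2.coe_toFinset⟩
  simp only [Set.ncard_coe_finset] at hU1 hU2 ⊢
  have ht : 4 ≤ ε * N := by rwa [div_le_iff₀ hε, mul_comm] at hN
  have hU : #U₁ ≤ #U₂ := by exact_mod_cast (by nlinarith : (#U₁ : ℝ) ≤ #U₂)
  have he : 200 * (#(G.defectGraph U₁ U₂).edgeFinset : ℝ) ≤ (ε * N) ^ 2 := by
    rw [← Set.ncard_coe_finset, coe_edgeFinset, edgeSet_defectGraph]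
    simp only [Finset.mem_coe] at hrem
    nlinarith [mul_nonneg (sq_nonneg (ε * N)) (by linarith : (0 : ℝ) ≤ 0.01 - ε),
      mul_nonneg (pow_nonneg hε.le 3) (Nat.cast_nonneg N)]
  have hcompl : (#U₂ᶜ : ℝ) = N - #U₂ := by
    rw [card_compl, Fintype.card_fin, Nat.cast_sub (by simpa using card_le_univ U₂)]
  have key := fun h ↦ exists_isMatching_subset_supp_min_le hU1e hU (by positivity) he h
  simp only [Fintype.card_fin, hcompl] at key
  constructor
  · intro h
    obtain ⟨c, M, hM, hc, hcard⟩ := key (by nlinarith)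
    exact ⟨c, M, hM, hc, by linarith [min_eq_left (by linarith : (N : ℝ) ≤ 2 * (N - #U₂))]⟩
  · intro h
    by_cases hbig : 2 * (ε * N) + 2 ≤ (N : ℝ) - #U₂
    · obtain ⟨c, M, hM, hc, hcard⟩ := key hbig
      exact ⟨c, M, hM, hc, by linarith [min_eq_right (by linarith : 2 * ((N : ℝ) - #U₂) ≤ N)]⟩
    -- otherwise the required bound is negative and the empty matching will do
    · exact ⟨G.connectedComponentMk ⟨0, by exact_mod_cast (by nlinarith : (0 : ℝ) < N)⟩, ⊥,
        fun _ h ↦ h.elim, by simp, by simp; linarith⟩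

theorem nearly_complete_two_holes_matching
    (ν1 ν2 ε : ℝ) (N : ℕ) (h01 : 0 ≤ ν1) (h12 : ν1 ≤ ν2) (h21 : ν2 ≤ 1)
    (hε : 0 < ε) (hε' : ε < 0.01 * ν1) (hN : 4 / ε ≤ (N : ℝ))
    (U1 U2 : Set (Fin N)) (hU1 : (U1.ncard : ℝ) = ν1 * N) (hU2 : (U2.ncard : ℝ) = ν2 * N)
    (G : SimpleGraph (Fin N))
    (hU1e : ∀ u ∈ U1, ∀ v ∈ U1, ¬ G.Adj u v)
    (hU2e : ∀ u ∈ U2, ∀ v ∈ U2, ¬ G.Adj u v)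
    (hrem : ({e ∈ (⊤ : SimpleGraph (Fin N)).edgeSet | e ∉ G.edgeSet ∧
          ¬ (∀ x ∈ e, x ∈ U1) ∧ ¬ (∀ x ∈ e, x ∈ U2)}.ncard : ℝ)
        ≤ ε ^ 3 * ((N : ℝ) * ((N : ℝ) - 1) / 2)) :
    ((U2.ncard : ℝ) ≤ (N : ℝ) / 2 →
      ∃ (c : G.ConnectedComponent) (M : G.Subgraph),
        M.IsMatching ∧ M.verts ⊆ c.supp ∧ (1 - 5 * ε) * N ≤ (M.verts.ncard : ℝ)) ∧
    ((N : ℝ) / 2 ≤ (U2.ncard : ℝ) →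
      ∃ (c : G.ConnectedComponent) (M : G.Subgraph),
        M.IsMatching ∧ M.verts ⊆ c.supp ∧
        (2 - 7 * ε) * N - 2 * U2.ncard ≤ (M.verts.ncard : ℝ)) :=
  nearly_complete_two_holes_matching_general ν1 ν2 ε N h12 h21 hε hε' hN U1 U2 hU1 hU2 G hU1e hrem
end

section
/- Let F be a finite connected simple graph containing an odd cycle, and let M be a matching in F. Then F contains a closed walk of odd length which traverses every edge of M. -/
/-!
Walking out to an edge, across it, and back along the same route is a closed walk of even
length through that edge; concatenating such detours for the finitely many edges of `M` and
prepending the odd cycle gives a closed walk of odd length through every edge of `M`.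
-/

open SimpleGraph

namespace SimpleGraph

variable {V : Type*} {G : SimpleGraph V}

lemma Connected.exists_even_closed_walk_mem_edges (hG : G.Connected) (u : V) {e : Sym2 V}
    (he : e ∈ G.edgeSet) : ∃ w : G.Walk u u, Even w.length ∧ e ∈ w.edges := by
  induction e using Sym2.ind with
  | _ x y =>
    obtain ⟨p⟩ := hG.preconnected u x
    let q : G.Walk u y := p.concat (G.mem_edgeSet.mp he)
    refine ⟨q.append q.reverse, ⟨q.length, by simp⟩, ?_⟩
    rw [Walk.edges_append, Walk.edges_concat, List.concat_eq_append]
    exact List.mem_append_left _ (List.mem_concat_self ..)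

lemma Connected.exists_even_closed_walk_subset_edges (hG : G.Connected) (u : V)
    {S : Set (Sym2 V)} (hS : S.Finite) (hSG : S ⊆ G.edgeSet) :
    ∃ w : G.Walk u u, Even w.length ∧ ∀ e ∈ S, e ∈ w.edges := by
  induction S, hS using Set.Finite.induction_on with
  | empty => exact ⟨Walk.nil, by simp, by simp⟩
  | @insert e S _ _ ih =>
    obtain ⟨w, hw, hwS⟩ := ih ((Set.subset_insert e S).trans hSG)
    obtain ⟨w', hw', hw'e⟩ := hG.exists_even_closed_walk_mem_edges u (hSG (Set.mem_insert e S))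
    refine ⟨w.append w', by simpa using hw.add hw', ?_⟩
    rintro f (rfl | hf)
    · simp [Walk.edges_append, hw'e]
    · simp [Walk.edges_append, hwS f hf]

end SimpleGraph

theorem odd_closed_walk_through_matching_general {V : Type*} [Fintype V]
    (F : SimpleGraph V) (hconn : F.Connected)
    (hodd : ∃ (u : V) (w : F.Walk u u), w.IsCycle ∧ Odd w.length)
    (M : F.Subgraph) :
    ∃ (v : V) (w : F.Walk v v), Odd w.length ∧ ∀ e ∈ M.edgeSet, e ∈ w.edges := by
  obtain ⟨u, c, -, hc⟩ := hodd
  obtain ⟨w, hw, hwM⟩ :=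
    hconn.exists_even_closed_walk_subset_edges u (Set.toFinite M.edgeSet) M.edgeSet_subset
  refine ⟨u, c.append w, by simpa using hc.add_even hw, fun e he => ?_⟩
  simp [Walk.edges_append, hwM e he]

theorem odd_closed_walk_through_matching {V : Type*} [Fintype V]
    (F : SimpleGraph V) (hconn : F.Connected)
    (hodd : ∃ (u : V) (w : F.Walk u u), w.IsCycle ∧ Odd w.length)
    (M : F.Subgraph) (hM : M.IsMatching) :
    ∃ (v : V) (w : F.Walk v v), Odd w.length ∧ ∀ e ∈ M.edgeSet, e ∈ w.edges :=
  odd_closed_walk_through_matching_general F hconn hodd M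
end
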